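/- Let v and k be integers with 2 ≤ k < v and let 𝒜 be a (v,k,1)-BIBD on the point set Fin v. For each x ∈ Fin v, let C_x denote the identity submatrix of the incidence matrix C with row set {succ_A(x) : A ∈ B_x} and with row succ_A(x) matched to column A for each A ∈ B_x. Then the family {C_x : x ∈ Fin v} is a non-overlapping identity submatrix cover of C: every one-entry (y,A) of C (i.e., every pair with y ∈ A ∈ 𝒜) is covered by exactly one member C_x; this cover consists of v identity submatrices, each of size (v−1)/(k−1). -/
import Mathlib


/-- The cyclic successor of `x` in a block `A ⊆ Fin v`: the least element of `A`
greater than `x` if one exists, otherwise the least element of `A`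
(junk value `x` if `A` is empty). -/
def succBlock {v : ℕ} (A : Finset (Fin v)) (x : Fin v) : Fin v :=
  if h : (A.filter fun y => x < y).Nonempty then (A.filter fun y => x < y).min' h
  else if h2 : A.Nonempty then A.min' h2 else x

/-- `IsIdentitySubmatrix M validCols R σ` : the row set `R`, with row `u` matched to
column `σ u`, forms an identity submatrix of the binary matrix `M` (where the entry
in row `u` and column `f` is `1` iff `M u f` holds), whose column index set is
`validCols`. -/
def IsIdentitySubmatrix {U F : Type*} (M : U → F → Prop) (validCols : Set F)
    (R : Finset U) (σ : U → F) : Prop :=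
  (∀ u ∈ R, σ u ∈ validCols) ∧ Set.InjOn σ ↑R ∧ (∀ u ∈ R, M u (σ u)) ∧
    ∀ u ∈ R, ∀ u' ∈ R, u ≠ u' → ¬ M u (σ u')

section aux
variable {v : ℕ}

lemma succBlock_mem {A : Finset (Fin v)} (h : A.Nonempty) (x : Fin v) :
    succBlock A x ∈ A := by
  unfold succBlock
  split_ifs with h1
  · exact (Finset.mem_filter.1 (Finset.min'_mem _ h1)).1
  · exact A.min'_mem h

lemma succBlock_ne {A : Finset (Fin v)} {x y : Fin v} (hy : y ∈ A) (hyx : y ≠ x) :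
    succBlock A x ≠ x := by
  have hA : A.Nonempty := ⟨y, hy⟩
  unfold succBlock
  split_ifs with h1
  · exact ne_of_gt (Finset.mem_filter.1 (Finset.min'_mem _ h1)).2
  · have hle : A.min' hA ≤ y := Finset.min'_le _ _ hy
    have hyltx : y < x := by
      by_contra hc
      push_neg at hc
      exact h1 ⟨y, Finset.mem_filter.2 ⟨hy, lt_of_le_of_ne hc (Ne.symm hyx)⟩⟩
    exact ne_of_lt (lt_of_le_of_lt hle hyltx)

lemma succBlock_lt_ne {A : Finset (Fin v)} {x₁ x₂ : Fin v}
    (h1 : x₁ ∈ A) (h2 : x₂ ∈ A) (hlt : x₁ < x₂) :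
    succBlock A x₁ ≠ succBlock A x₂ := by
  have hA : A.Nonempty := ⟨x₁, h1⟩
  have hf1 : (A.filter fun y => x₁ < y).Nonempty :=
    ⟨x₂, Finset.mem_filter.2 ⟨h2, hlt⟩⟩
  have e1 : succBlock A x₁ = (A.filter fun y => x₁ < y).min' hf1 := by
    unfold succBlock; rw [dif_pos hf1]
  by_cases hf2 : (A.filter fun y => x₂ < y).Nonempty
  · have e2 : succBlock A x₂ = (A.filter fun y => x₂ < y).min' hf2 := by
      unfold succBlock; rw [dif_pos hf2]
    have hlt2 : x₂ < succBlock A x₂ := by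
      rw [e2]; exact (Finset.mem_filter.1 (Finset.min'_mem _ hf2)).2
    have hle1 : succBlock A x₁ ≤ x₂ := by
      rw [e1]; exact Finset.min'_le _ _ (Finset.mem_filter.2 ⟨h2, hlt⟩)
    exact ne_of_lt (lt_of_le_of_lt hle1 hlt2)
  · have e2 : succBlock A x₂ = A.min' hA := by
      unfold succBlock; rw [dif_neg hf2, dif_pos hA]
    have hle2 : succBlock A x₂ ≤ x₁ := by rw [e2]; exact Finset.min'_le _ _ h1
    have hgt1 : x₁ < succBlock A x₁ := by
      rw [e1]; exact (Finset.mem_filter.1 (Finset.min'_mem _ hf1)).2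
    exact ne_of_gt (lt_of_le_of_lt hle2 hgt1)

lemma succBlock_injOn (A : Finset (Fin v)) :
    Set.InjOn (fun x => succBlock A x) ↑A := by
  intro x₁ hx₁ x₂ hx₂ h
  rcases lt_trichotomy x₁ x₂ with hlt | heq | hgt
  · exact absurd h (succBlock_lt_ne hx₁ hx₂ hlt)
  · exact heq
  · exact absurd h.symm (succBlock_lt_ne hx₂ hx₁ hgt)

lemma succBlock_surjOn {A : Finset (Fin v)} {y : Fin v} (hy : y ∈ A) :
    ∃ x ∈ A, succBlock A x = y := by
  have hA : A.Nonempty := ⟨y, hy⟩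
  have himg : A.image (fun x => succBlock A x) = A := by
    apply Finset.eq_of_subset_of_card_le
    · intro z hz
      simp only [Finset.mem_image] at hz
      obtain ⟨x, hx, rfl⟩ := hz
      exact succBlock_mem hA x
    · exact le_of_eq (Finset.card_image_of_injOn (succBlock_injOn A)).symm
  rw [← himg] at hy
  simpa using Finset.mem_image.1 hy

end aux

/-- The one-entry `(y, A)` of the incidence matrix of the design `𝒜` is covered by
the identity submatrix `C_x` (whose row set is `{succ_A(x) : A ∈ B_x}` and whose
column set is `B_x`, the set of blocks containing `x`). -/
def CoveredBIBD {v : ℕ} (𝒜 : Finset (Finset (Fin v))) (x y : Fin v)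
    (A : Finset (Fin v)) : Prop :=
  (∃ A' ∈ 𝒜.filter (fun B => x ∈ B), y = succBlock A' x) ∧
    A ∈ 𝒜.filter (fun B => x ∈ B)

theorem stmt2 (v k : ℕ) (hk : 2 ≤ k) (hkv : k < v)
    (𝒜 : Finset (Finset (Fin v)))
    (hcard : ∀ A ∈ 𝒜, A.card = k)
    (hpair : ∀ x y : Fin v, x ≠ y → ∃! A, A ∈ 𝒜 ∧ x ∈ A ∧ y ∈ A) :
    -- each C_x is an identity submatrix of the incidence matrix
    (∀ x : Fin v, ∃ σ : Fin v → Finset (Fin v),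
      (∀ A ∈ 𝒜.filter (fun B => x ∈ B), σ (succBlock A x) = A) ∧
      IsIdentitySubmatrix (fun y A => y ∈ A) {A | A ∈ 𝒜}
        ((𝒜.filter (fun B => x ∈ B)).image (fun A => succBlock A x)) σ) ∧
    -- every one-entry of the incidence matrix is covered by exactly one C_x
    (∀ (y : Fin v) (A : Finset (Fin v)), A ∈ 𝒜 → y ∈ A →
      ∃! x : Fin v, CoveredBIBD 𝒜 x y A) ∧
    -- the cover consists of v identity submatrices
    (Fintype.card (Fin v) = v) ∧
    -- each of size (v-1)/(k-1)
    (∀ x : Fin v,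
      ((𝒜.filter (fun B => x ∈ B)).image (fun A => succBlock A x)).card
        = (v - 1) / (k - 1)) := by
  classical
  -- basic facts about blocks
  have hne : ∀ A ∈ 𝒜, A.Nonempty := fun A hA =>
    Finset.card_pos.1 (by rw [hcard A hA]; omega)
  have hsuccne : ∀ A ∈ 𝒜, ∀ x ∈ A, succBlock A x ≠ x := by
    intro A hA x hx
    obtain ⟨y, hy, hyx⟩ : ∃ y ∈ A, y ≠ x := by
      apply Finset.exists_mem_ne
      rw [hcard A hA]; omega
    exact succBlock_ne hy hyx
  have huniq : ∀ {A A' : Finset (Fin v)}, A ∈ 𝒜 → A' ∈ 𝒜 →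
      ∀ {x y : Fin v}, x ≠ y → x ∈ A → y ∈ A → x ∈ A' → y ∈ A' → A = A' := by
    intro A A' hA hA' x y hxy hxA hyA hxA' hyA'
    exact (hpair x y hxy).unique ⟨hA, hxA, hyA⟩ ⟨hA', hxA', hyA'⟩
  -- injectivity of A ↦ succBlock A x on B_x
  have hinjB : ∀ x : Fin v, ∀ A ∈ 𝒜.filter (fun B => x ∈ B),
      ∀ A' ∈ 𝒜.filter (fun B => x ∈ B),
      succBlock A x = succBlock A' x → A = A' := by
    intro x A hA A' hA' hs
    rw [Finset.mem_filter] at hA hA'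
    have hyA : succBlock A x ∈ A := succBlock_mem (hne A hA.1) x
    have hyA' : succBlock A x ∈ A' := hs ▸ succBlock_mem (hne A' hA'.1) x
    exact huniq hA.1 hA'.1 (Ne.symm (hsuccne A hA.1 x hA.2)) hA.2 hyA hA'.2 hyA'
  refine ⟨?_, ?_, Fintype.card_fin v, ?_⟩
  · -- identity submatrices
    intro x
    have hσex : ∃ σ : Fin v → Finset (Fin v),
        ∀ A ∈ 𝒜.filter (fun B => x ∈ B), σ (succBlock A x) = A := by
      refine ⟨fun y => if h : ∃ A, A ∈ 𝒜 ∧ x ∈ A ∧ y ∈ A then h.choose else ∅, ?_⟩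
      intro A hA
      rw [Finset.mem_filter] at hA
      have hyA : succBlock A x ∈ A := succBlock_mem (hne A hA.1) x
      have hex : ∃ A', A' ∈ 𝒜 ∧ x ∈ A' ∧ succBlock A x ∈ A' := ⟨A, hA.1, hA.2, hyA⟩
      beta_reduce
      rw [dif_pos hex]
      obtain ⟨h1, h2, h3⟩ := hex.choose_spec
      exact huniq h1 hA.1 (Ne.symm (hsuccne A hA.1 x hA.2)) h2 h3 hA.2 hyA
    obtain ⟨σ, hσ⟩ := hσex
    have hmemR : ∀ u : Fin v,
        u ∈ (𝒜.filter (fun B => x ∈ B)).image (fun A => succBlock A x) ↔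
        ∃ A ∈ 𝒜.filter (fun B => x ∈ B), succBlock A x = u := by
      intro u; simp [Finset.mem_image]
    refine ⟨σ, hσ, ?_, ?_, ?_, ?_⟩
    · intro u hu
      obtain ⟨A, hA, rfl⟩ := (hmemR u).1 hu
      rw [hσ A hA]
      exact (Finset.mem_filter.1 hA).1
    · intro u hu u' hu' h
      obtain ⟨A, hA, rfl⟩ := (hmemR u).1 (Finset.mem_coe.1 hu)
      obtain ⟨A', hA', rfl⟩ := (hmemR u').1 (Finset.mem_coe.1 hu')
      rw [hσ A hA, hσ A' hA'] at h
      rw [h]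
    · intro u hu
      obtain ⟨A, hA, rfl⟩ := (hmemR u).1 hu
      rw [hσ A hA]
      exact succBlock_mem (hne A (Finset.mem_filter.1 hA).1) x
    · intro u hu u' hu' hne' hmem
      obtain ⟨A, hA, rfl⟩ := (hmemR u).1 hu
      obtain ⟨A', hA', rfl⟩ := (hmemR u').1 hu'
      rw [hσ A' hA'] at hmem
      rw [Finset.mem_filter] at hA hA'
      have hAA' : A = A' :=
        huniq hA.1 hA'.1 (Ne.symm (hsuccne A hA.1 x hA.2)) hA.2
          (succBlock_mem (hne A hA.1) x) hA'.2 hmem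
      exact hne' (by rw [hAA'])
  · -- exact cover
    intro y A hA hy
    obtain ⟨x, hxA, hsx⟩ := succBlock_surjOn hy
    have hAfilt : A ∈ 𝒜.filter (fun B => x ∈ B) := Finset.mem_filter.2 ⟨hA, hxA⟩
    refine ⟨x, ⟨⟨A, hAfilt, hsx.symm⟩, hAfilt⟩, ?_⟩
    intro x' hx'
    obtain ⟨⟨A', hA', hyA'⟩, hAx'⟩ := hx'
    rw [Finset.mem_filter] at hA' hAx'
    have hyne : y ≠ x' := by rw [hyA']; exact hsuccne A' hA'.1 x' hA'.2
    have hyA'mem : y ∈ A' := by rw [hyA']; exact succBlock_mem (hne A' hA'.1) x'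
    have hA'A : A' = A := huniq hA'.1 hA (Ne.symm hyne) hA'.2 hyA'mem hAx'.2 hy
    rw [hA'A] at hyA'
    exact succBlock_injOn A (Finset.mem_coe.2 hAx'.2) (Finset.mem_coe.2 hxA)
      (hyA'.symm.trans hsx.symm)
  · -- size
    intro x
    have hr : ((𝒜.filter (fun B => x ∈ B)).image (fun A => succBlock A x)).card
        = (𝒜.filter (fun B => x ∈ B)).card := by
      apply Finset.card_image_of_injOn
      intro A hA A' hA' h
      exact hinjB x A (Finset.mem_coe.1 hA) A' (Finset.mem_coe.1 hA') h
    have hbiU : (𝒜.filter (fun B => x ∈ B)).biUnion (fun A => A.erase x)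
        = Finset.univ.erase x := by
      ext y
      simp only [Finset.mem_biUnion, Finset.mem_erase, Finset.mem_filter,
        Finset.mem_univ, and_true]
      constructor
      · rintro ⟨A, ⟨hA, hxA⟩, hyx, hyA⟩
        exact hyx
      · intro hyx
        obtain ⟨A, ⟨hA, hxA, hyA⟩, -⟩ := hpair x y (Ne.symm hyx)
        exact ⟨A, ⟨hA, hxA⟩, hyx, hyA⟩
    have hdisj : ∀ A ∈ 𝒜.filter (fun B => x ∈ B),
        ∀ A' ∈ 𝒜.filter (fun B => x ∈ B), A ≠ A' →
        Disjoint (A.erase x) (A'.erase x) := by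
      intro A hA A' hA' hne'
      rw [Finset.mem_filter] at hA hA'
      rw [Finset.disjoint_left]
      intro y hyA hyA'
      rw [Finset.mem_erase] at hyA hyA'
      exact hne' (huniq hA.1 hA'.1 (Ne.symm hyA.1) hA.2 hyA.2 hA'.2 hyA'.2)
    have hcount : (𝒜.filter (fun B => x ∈ B)).card * (k - 1) = v - 1 := by
      have := Finset.card_biUnion hdisj
      rw [hbiU] at this
      have hcerase : ∀ A ∈ 𝒜.filter (fun B => x ∈ B), (A.erase x).card = k - 1 := by
        intro A hA
        rw [Finset.mem_filter] at hA
        rw [Finset.card_erase_of_mem hA.2, hcard A hA.1]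
      rw [Finset.sum_congr rfl hcerase, Finset.sum_const, smul_eq_mul] at this
      rw [← this, Finset.card_erase_of_mem (Finset.mem_univ x), Finset.card_univ,
        Fintype.card_fin]
    rw [hr, ← hcount, Nat.mul_div_cancel _ (by omega : 0 < k - 1)]
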